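/- Define h : ℝ → ℝ by h(ξ) = |cos ξ| + |sin ξ|, and for λ > 0 and k ∈ ℕ set τ_k = π(k − 1/2)/(2λ²). Let λ > 0, let j ≥ 2 be an integer, let τ ∈ [τ_{j−2}, τ_j] with τ > 0, and suppose ξ₋ = πj/2 − π/4 − μ₋ and ξ₊ = πj/2 − π/4 + μ₊ with 0 < μ₋ ≤ 4/√j and 1/(πj) ≤ μ₊ ≤ 4/√j. Then √(ξ₊/(2τ)) − √(ξ₋/(2τ)) ≥ 1/(2π² · j^{3/2} · √τ). -/
import Mathlib


open Real

/-- The function `h(ξ) = |cos ξ| + |sin ξ|`. -/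
noncomputable def h (ξ : ℝ) : ℝ := |Real.cos ξ| + |Real.sin ξ|

/-- The collision time of index `k` (as a real parameter): `τ_k = π(k − 1/2)/(2λ²)`. -/
noncomputable def τfun (lam k : ℝ) : ℝ := π * (k - 1 / 2) / (2 * lam ^ 2)

set_option maxHeartbeats 1000000 in
/-- Quantitative lower bound on the gap between consecutive solutions
`y₋ = √(ξ₋/(2τ))` and `y₊ = √(ξ₊/(2τ))` of the implicit equation, where
`ξ∓ = πj/2 − π/4 ∓ μ∓`. -/
theorem gap_between_consecutive_solutions (lam : ℝ) (hlam : 0 < lam)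
    (j : ℕ) (hj : 2 ≤ j) (τ : ℝ) (hτpos : 0 < τ)
    (hτ : τ ∈ Set.Icc (τfun lam ((j : ℝ) - 2)) (τfun lam (j : ℝ)))
    (μm μp : ℝ) (hμm₀ : 0 < μm) (hμm : μm ≤ 4 / Real.sqrt j)
    (hμp₀ : 1 / (π * j) ≤ μp) (hμp : μp ≤ 4 / Real.sqrt j) :
    1 / (2 * π ^ 2 * (j : ℝ) ^ ((3 : ℝ) / 2) * Real.sqrt τ) ≤
      Real.sqrt ((π * j / 2 - π / 4 + μp) / (2 * τ))
        - Real.sqrt ((π * j / 2 - π / 4 - μm) / (2 * τ)) := by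
  have hjr : (2:ℝ) ≤ (j:ℝ) := by exact_mod_cast hj
  have hjr0 : (0:ℝ) < (j:ℝ) := by linarith
  have hπ := Real.pi_gt_three
  have hπ0 := Real.pi_pos
  set jr := (j:ℝ) with hjrdef
  set a0 : ℝ := π * jr / 2 - π / 4 with ha0
  have hπj : π * 2 ≤ π * jr := mul_le_mul_of_nonneg_left hjr hπ0.le
  have ha0pos : 0 < a0 := by rw [ha0]; nlinarith
  have hμp0 : 0 < μp := lt_of_lt_of_le (by positivity) hμp₀
  have hsj : 0 < Real.sqrt jr := Real.sqrt_pos.mpr hjr0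
  have h43 : (4/3:ℝ) ≤ Real.sqrt jr := by
    rw [show (4/3:ℝ) = Real.sqrt ((4/3)^2) from (Real.sqrt_sq (by norm_num)).symm]
    exact Real.sqrt_le_sqrt (by nlinarith)
  have hμp3 : μp ≤ 3 := hμp.trans (by rw [div_le_iff₀ hsj]; nlinarith)
  have hbπ : a0 + μp ≤ π * jr := by rw [ha0]; nlinarith
  have hbpos : 0 < a0 + μp := by positivity
  set A := Real.sqrt a0 with hA
  set B := Real.sqrt (a0 + μp) with hB
  set P := Real.sqrt (π * jr) with hP
  have hA2 : A^2 = a0 := Real.sq_sqrt ha0pos.le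
  have hB2 : B^2 = a0 + μp := Real.sq_sqrt hbpos.le
  have hApos : 0 < A := Real.sqrt_pos.mpr ha0pos
  have hBpos : 0 < B := Real.sqrt_pos.mpr hbpos
  have hPpos : 0 < P := Real.sqrt_pos.mpr (by positivity)
  have hAP : A ≤ P := Real.sqrt_le_sqrt (by linarith)
  have hBP : B ≤ P := Real.sqrt_le_sqrt hbπ
  have hBA : B - A = μp / (B + A) := by
    rw [eq_div_iff (by positivity)]
    linear_combination hB2 - hA2
  have hkey : 1 / (π * jr) / (2 * P) ≤ B - A := by
    rw [hBA]
    exact div_le_div₀ hμp0.le hμp₀ (by positivity) (by linarith)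
  have hmono : Real.sqrt ((a0 - μm) / (2*τ)) ≤ Real.sqrt (a0 / (2*τ)) := by
    apply Real.sqrt_le_sqrt
    gcongr
    linarith
  have e0 : Real.sqrt (2*τ) = Real.sqrt 2 * Real.sqrt τ := Real.sqrt_mul (by norm_num) τ
  have eB : Real.sqrt ((a0 + μp)/(2*τ)) = B / (Real.sqrt 2 * Real.sqrt τ) := by
    rw [Real.sqrt_div hbpos.le, e0]
  have eA : Real.sqrt (a0/(2*τ)) = A / (Real.sqrt 2 * Real.sqrt τ) := by
    rw [Real.sqrt_div ha0pos.le, e0]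
  have hjr32 : jr ^ ((3:ℝ)/2) = jr * Real.sqrt jr := by
    rw [Real.sqrt_eq_rpow, show (3:ℝ)/2 = 1 + 1/2 by norm_num, Real.rpow_add hjr0,
      Real.rpow_one]
  have hPe : P = Real.sqrt π * Real.sqrt jr := Real.sqrt_mul hπ0.le jr
  have h2π : Real.sqrt 2 * Real.sqrt π ≤ π := by
    rw [← Real.sqrt_mul (by norm_num)]
    calc Real.sqrt (2*π) ≤ Real.sqrt (π*π) := Real.sqrt_le_sqrt (by nlinarith [hπ])
      _ = π := Real.sqrt_mul_self hπ0.le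
  have hsτ : 0 < Real.sqrt τ := Real.sqrt_pos.mpr hτpos
  have hs2 : 0 < Real.sqrt 2 := Real.sqrt_pos.mpr (by norm_num)
  have hsπ : 0 ≤ Real.sqrt π := Real.sqrt_nonneg π
  calc 1 / (2 * π ^ 2 * jr ^ ((3:ℝ)/2) * Real.sqrt τ)
      ≤ (1 / (π * jr) / (2 * P)) / (Real.sqrt 2 * Real.sqrt τ) := by
        rw [div_div, div_div, hjr32, hPe]
        apply one_div_le_one_div_of_le (by positivity)
        calc π * jr * (2 * (Real.sqrt π * Real.sqrt jr) * (Real.sqrt 2 * Real.sqrt τ))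
            = (Real.sqrt 2 * Real.sqrt π) * (2 * π * (jr * Real.sqrt jr) * Real.sqrt τ) := by
              ring
          _ ≤ π * (2 * π * (jr * Real.sqrt jr) * Real.sqrt τ) :=
              mul_le_mul_of_nonneg_right h2π (by positivity)
          _ = 2 * π ^ 2 * (jr * Real.sqrt jr) * Real.sqrt τ := by ring
    _ ≤ (B - A) / (Real.sqrt 2 * Real.sqrt τ) := by gcongr
    _ = Real.sqrt ((a0 + μp)/(2*τ)) - Real.sqrt (a0/(2*τ)) := by
        rw [eB, eA, div_sub_div_same]
    _ ≤ Real.sqrt ((a0 + μp)/(2*τ)) - Real.sqrt ((a0 - μm)/(2*τ)) := by linarith
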